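/- Let Ω₁, …, Ω_m, Ω_{m+1} be nonempty closed subsets of ℝ^n, let x̄ ∈ (Ω₁ ∩ ⋯ ∩ Ω_m) ∩ Ω_{m+1}, and let δ > 0. Suppose that for each j ∈ {1,…,m} there is a constant κ_j > 0 such that dist(x, Ω_j ∩ Ω_{m+1}) ≤ κ_j · max(dist(x, Ω_j), dist(x, Ω_{m+1})) for all x in the closed ball B_δ(x̄). Then with κ̄ = max_{j} κ_j, the pair (⋃_{j=1}^m Ω_j, Ω_{m+1}) is locally linearly regular with modulus κ̄ on B_δ(x̄): dist(x, (⋃_{j=1}^m Ω_j) ∩ Ω_{m+1}) ≤ κ̄ · max(dist(x, ⋃_{j=1}^m Ω_j), dist(x, Ω_{m+1})) for all x ∈ B_δ(x̄). -/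

import Mathlib

/-!
The distance to a finite union is attained at one of its members `Ω j₀`; the regularity of the
pair `(Ω j₀, Ω')` then bounds the distance to `(⋃ j, Ω j) ∩ Ω' ⊇ Ω j₀ ∩ Ω'`.
-/

open Metric

namespace Metric

variable {α ι : Type*} [PseudoMetricSpace α]

theorem exists_infDist_iUnion_eq [Finite ι] [Nonempty ι] (x : α) (s : ι → Set α) :
    ∃ j, infDist x (⋃ i, s i) = infDist x (s j) := by
  obtain ⟨j, hj⟩ := Finite.exists_min fun i => infEDist x (s i)
  refine ⟨j, congrArg ENNReal.toReal ?_⟩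
  rw [infEDist_iUnion]
  exact le_antisymm (iInf_le _ j) (le_iInf hj)

theorem infDist_iUnion_inter_le_mul_max [Finite ι] [Nonempty ι] {s : ι → Set α} {t : Set α}
    {x : α} {κ : ι → ℝ} {K : ℝ} (hst : ∀ i, (s i ∩ t).Nonempty) (hκK : ∀ i, κ i ≤ K)
    (hreg : ∀ i, infDist x (s i ∩ t) ≤ κ i * max (infDist x (s i)) (infDist x t)) :
    infDist x ((⋃ i, s i) ∩ t) ≤ K * max (infDist x (⋃ i, s i)) (infDist x t) := by
  obtain ⟨j, hj⟩ := exists_infDist_iUnion_eq x s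
  calc infDist x ((⋃ i, s i) ∩ t)
      ≤ infDist x (s j ∩ t) :=
        infDist_le_infDist_of_subset (Set.inter_subset_inter_left _ (Set.subset_iUnion s j))
          (hst j)
    _ ≤ κ j * max (infDist x (s j)) (infDist x t) := hreg j
    _ ≤ K * max (infDist x (⋃ i, s i)) (infDist x t) := by
        rw [hj]
        exact mul_le_mul_of_nonneg_right (hκK j) (le_max_of_le_right infDist_nonneg)

end Metric

theorem stmt6 {n m : ℕ} (hm : 0 < m)
    (Ω : Fin m → Set (EuclideanSpace ℝ (Fin n))) (Ω' : Set (EuclideanSpace ℝ (Fin n)))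
    (xb : EuclideanSpace ℝ (Fin n)) (hxbΩ : ∀ j, xb ∈ Ω j) (hxbΩ' : xb ∈ Ω')
    (δ : ℝ) (κ : Fin m → ℝ)
    (hreg : ∀ j, ∀ x ∈ Metric.closedBall xb δ,
      Metric.infDist x (Ω j ∩ Ω') ≤
        κ j * max (Metric.infDist x (Ω j)) (Metric.infDist x Ω')) :
    ∀ x ∈ Metric.closedBall xb δ,
      Metric.infDist x ((⋃ j, Ω j) ∩ Ω') ≤
        (Finset.univ.sup' ⟨⟨0, hm⟩, Finset.mem_univ _⟩ κ) *
          max (Metric.infDist x (⋃ j, Ω j)) (Metric.infDist x Ω') := by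
  intro x hx
  have : Nonempty (Fin m) := ⟨⟨0, hm⟩⟩
  exact infDist_iUnion_inter_le_mul_max (fun j => ⟨xb, hxbΩ j, hxbΩ'⟩)
    (fun j => Finset.le_sup' κ (Finset.mem_univ j)) (fun j => hreg j x hx)
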